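/- Let d, n ≥ 1, let Σ be a d×d real symmetric positive definite matrix, let R ∈ SO(d), and set R_Σ = Σ^{1/2} R Σ^{-1/2}. Let P_Σ denote the n-fold product of the centered multivariate Gaussian measure on ℝ^d with covariance Σ, let W(y₁,…,y_n) = Σᵢ yᵢ yᵢᵀ, and let π(X) = (det X)^{-1/d} X be the projection normalizing the determinant. Then the pushforward of P_Σ under y ↦ π(R_Σ · W(y) · R_Σᵀ) equals the pushforward of P_Σ under y ↦ π(W(y)); i.e., the projective Wishart distribution PW(Σ, n) is invariant under the action of H_Σ. -/

import Mathlib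

/-!
Write `Q = Σ^{1/2}` and `A = Q R Q⁻¹`. From `Q Qᵀ = Σ` and `R Rᵀ = 1` one gets `det A = 1` and
`Aᵀ Σ⁻¹ A = Σ⁻¹`, so `v ↦ A v` preserves both Lebesgue measure and the Gaussian density, hence
`γ_Σ`, and, acting coordinatewise, `γ_Σ^{⊗n}`. Since `W(A y₁, …, A yₙ) = A W(y) Aᵀ`, the law of
`π(A W(y) Aᵀ)` is the law of `π(W(y))`.
-/

open Matrix MeasureTheory

/-- Matrices inherit the product measurable structure of `Fin d → Fin d → ℝ`. -/
instance {d : ℕ} : MeasurableSpace (Matrix (Fin d) (Fin d) ℝ) :=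
  inferInstanceAs (MeasurableSpace (Fin d → Fin d → ℝ))

/-- The density of the centered multivariate Gaussian distribution with covariance `S`
with respect to Lebesgue measure on `ℝ^d`. -/
noncomputable def gaussianDensity {d : ℕ} (S : Matrix (Fin d) (Fin d) ℝ) (v : Fin d → ℝ) : ℝ :=
  (2 * Real.pi) ^ (-(d : ℝ) / 2) * S.det ^ (-(1 : ℝ) / 2) *
    Real.exp (-(1 / 2) * (v ⬝ᵥ S⁻¹ *ᵥ v))

/-- The centered multivariate Gaussian measure on `ℝ^d` with covariance matrix `S`. -/
noncomputable def gaussianMeasure {d : ℕ} (S : Matrix (Fin d) (Fin d) ℝ) :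
    Measure (Fin d → ℝ) :=
  volume.withDensity fun v => ENNReal.ofReal (gaussianDensity S v)

/-- The sum of outer products `Σᵢ yᵢ yᵢᵀ` of a family of `n` vectors of `ℝ^d`. -/
noncomputable def wishartSample {d n : ℕ} (y : Fin n → Fin d → ℝ) :
    Matrix (Fin d) (Fin d) ℝ :=
  ∑ i, Matrix.vecMulVec (y i) (y i)

open scoped Classical in
/-- The positive semidefinite square root of a matrix, extended to a total function
(junk value `0` when the matrix is not positive semidefinite). -/
noncomputable def matSqrt {d : ℕ} (A : Matrix (Fin d) (Fin d) ℝ) : Matrix (Fin d) (Fin d) ℝ :=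
  if hA : A.PosSemidef then
    (hA.1.eigenvectorUnitary : Matrix (Fin d) (Fin d) ℝ) * diagonal (Real.sqrt ∘ hA.1.eigenvalues) *
      (star hA.1.eigenvectorUnitary : Matrix (Fin d) (Fin d) ℝ)
  else 0

open scoped Classical in
/-- The determinant-normalizing projection `π(X) = (det X)^{-1/d} • X`, with the convention
`π(X) = X` when `det X ≤ 0`. -/
noncomputable def projDet {d : ℕ} (X : Matrix (Fin d) (Fin d) ℝ) : Matrix (Fin d) (Fin d) ℝ :=
  if 0 < X.det then (X.det ^ (-(1 : ℝ) / d)) • X else X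

open scoped ENNReal

namespace MeasureTheory.MeasurePreserving

variable {α β γ : Type*} [MeasurableSpace α] [MeasurableSpace β] [MeasurableSpace γ]
  {μ : Measure α} {ν : Measure β} {f : α → β}

theorem map_comp_eq (hf : MeasurePreserving f μ ν) {g : β → γ} (hg : Measurable g) :
    μ.map (g ∘ f) = ν.map g := by
  rw [← Measure.map_map hg hf.measurable, hf.map_eq]

theorem withDensity_comp (hf : MeasurePreserving f μ ν) {ρ : β → ℝ≥0∞} (hρ : Measurable ρ) :
    MeasurePreserving f (μ.withDensity (ρ ∘ f)) (ν.withDensity ρ) := by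
  refine ⟨hf.measurable, Measure.ext fun s hs => ?_⟩
  rw [Measure.map_apply hf.measurable hs, withDensity_apply _ hs,
    withDensity_apply _ (hf.measurable hs), ← hf.map_eq, setLIntegral_map hs hρ hf.measurable]
  rfl

end MeasureTheory.MeasurePreserving

section Measurability

variable {d n : ℕ}

/- There is no `BorelSpace` instance on matrices, so measurability is obtained from continuity
on the underlying space `Fin d → Fin d → ℝ`. -/
theorem measurable_det : Measurable fun M : Matrix (Fin d) (Fin d) ℝ => M.det :=
  (show Continuous fun M : Fin d → Fin d → ℝ => (Matrix.of M).det by fun_prop).measurable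

theorem measurable_projDet : Measurable (projDet (d := d)) := by
  unfold projDet
  refine .ite (measurableSet_lt measurable_const measurable_det) ?_ measurable_id
  exact (show Measurable fun M : Fin d → Fin d → ℝ => (Matrix.of M).det ^ (-(1 : ℝ) / d) • M from
    (measurable_det.pow_const _).smul measurable_id)

theorem measurable_wishartSample : Measurable (wishartSample (d := d) (n := n)) :=
  (show Continuous fun y : Fin n → Fin d → ℝ =>
    (∑ i, vecMulVec (y i) (y i) : Fin d → Fin d → ℝ) by fun_prop).measurable

end Measurability

theorem wishartSample_mulVec {d n : ℕ} (A : Matrix (Fin d) (Fin d) ℝ) (y : Fin n → Fin d → ℝ) :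
    wishartSample (fun i => A *ᵥ y i) = A * wishartSample y * Aᵀ := by
  simp only [wishartSample, Finset.mul_sum, Finset.sum_mul, mul_vecMulVec, vecMulVec_mul,
    vecMul_transpose]

theorem matSqrt_mul_transpose {d : ℕ} {S : Matrix (Fin d) (Fin d) ℝ} (hS : S.PosSemidef) :
    matSqrt S * (matSqrt S)ᵀ = S := by
  set U : Matrix (Fin d) (Fin d) ℝ := ↑hS.1.eigenvectorUnitary
  set D : Matrix (Fin d) (Fin d) ℝ := diagonal (Real.sqrt ∘ hS.1.eigenvalues)
  have hsqrt : matSqrt S = U * D * star U := dif_pos hS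
  have hDD : D * D = diagonal (RCLike.ofReal ∘ hS.1.eigenvalues) := by
    rw [diagonal_mul_diagonal]
    congr 1
    funext i
    simp [Real.mul_self_sqrt (hS.eigenvalues_nonneg i)]
  have hUU : star U * U = 1 := Unitary.coe_star_mul_self _
  have hsymm : (U * D * star U)ᵀ = U * D * star U := by
    rw [star_eq_conjTranspose, conjTranspose_eq_transpose_of_trivial, transpose_mul,
      transpose_mul, transpose_transpose, diagonal_transpose, Matrix.mul_assoc]
  conv_rhs => rw [hS.1.spectral_theorem, Unitary.conjStarAlgAut_apply]
  calc matSqrt S * (matSqrt S)ᵀ = U * (D * (star U * U) * D) * star U := by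
        rw [hsqrt, hsymm]; simp only [Matrix.mul_assoc]
    _ = _ := by rw [hUU, Matrix.mul_one, hDD]

section ConjugateOrthogonal

variable {ι K : Type*} [Fintype ι] [DecidableEq ι] [CommRing K] {Q R S : Matrix ι ι K}

theorem isUnit_of_mul_transpose_eq (hQS : Q * Qᵀ = S) (hS : IsUnit S) : IsUnit Q := by
  rw [← hQS, isUnit_iff_isUnit_det, det_mul, det_transpose] at hS
  exact (isUnit_iff_isUnit_det Q).2 (isUnit_of_mul_isUnit_left hS)

theorem transpose_conj_mul_inv_mul_conj (hQS : Q * Qᵀ = S) (hS : IsUnit S) (hR : R * Rᵀ = 1) :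
    (Q * R * Q⁻¹)ᵀ * S⁻¹ * (Q * R * Q⁻¹) = S⁻¹ := by
  have hQ : IsUnit Q.det := (isUnit_iff_isUnit_det Q).1 (isUnit_of_mul_transpose_eq hQS hS)
  have hQT : IsUnit Qᵀ.det := by rwa [det_transpose]
  have hRR : Rᵀ * R = 1 := mul_eq_one_comm.mp hR
  have hSinv : S⁻¹ = Qᵀ⁻¹ * Q⁻¹ := by rw [← hQS, Matrix.mul_inv_rev]
  rw [hSinv, transpose_mul, transpose_mul, transpose_nonsing_inv]
  simp only [Matrix.mul_assoc, mul_nonsing_inv_cancel_left _ _ hQT,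
    nonsing_inv_mul_cancel_left _ _ hQ]
  rw [← Matrix.mul_assoc Rᵀ, hRR, Matrix.one_mul]

end ConjugateOrthogonal

theorem measurePreserving_mulVec_volume {ι : Type*} [Fintype ι] [DecidableEq ι]
    {A : Matrix ι ι ℝ} (hA : |A.det| = 1) :
    MeasurePreserving (A *ᵥ ·) volume volume := by
  refine ⟨by fun_prop, ?_⟩
  have hmap := Real.map_matrix_volume_pi_eq_smul_volume_pi (M := A)
    (by rintro h; simp [h] at hA)
  rwa [abs_inv, hA, inv_one, ENNReal.ofReal_one, one_smul] at hmap

section Gaussian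

variable {d : ℕ} {A S : Matrix (Fin d) (Fin d) ℝ}

instance (S : Matrix (Fin d) (Fin d) ℝ) : SigmaFinite (gaussianMeasure S) := by
  unfold gaussianMeasure
  infer_instance

theorem measurable_gaussianDensity (S : Matrix (Fin d) (Fin d) ℝ) :
    Measurable fun v => ENNReal.ofReal (gaussianDensity S v) := by
  unfold gaussianDensity
  fun_prop

theorem gaussianDensity_mulVec (h : Aᵀ * S⁻¹ * A = S⁻¹) (v : Fin d → ℝ) :
    gaussianDensity S (A *ᵥ v) = gaussianDensity S v := by
  have hquad : (A *ᵥ v) ⬝ᵥ S⁻¹ *ᵥ (A *ᵥ v) = v ⬝ᵥ S⁻¹ *ᵥ v := by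
    conv_rhs => rw [← h]
    rw [← mulVec_mulVec, ← mulVec_mulVec, dotProduct_mulVec v, vecMul_transpose]
  rw [gaussianDensity, gaussianDensity, hquad]

theorem measurePreserving_mulVec_gaussianMeasure (hA : |A.det| = 1)
    (h : Aᵀ * S⁻¹ * A = S⁻¹) :
    MeasurePreserving (A *ᵥ ·) (gaussianMeasure S) (gaussianMeasure S) := by
  have hρ : (fun v => ENNReal.ofReal (gaussianDensity S v)) ∘ (A *ᵥ ·)
      = fun v => ENNReal.ofReal (gaussianDensity S v) := by
    simp only [Function.comp_def, gaussianDensity_mulVec h]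
  have := (measurePreserving_mulVec_volume hA).withDensity_comp (measurable_gaussianDensity S)
  rwa [hρ] at this

end Gaussian

theorem projective_wishart_invariant_H_sigma_general (d n : ℕ)
    (S R : Matrix (Fin d) (Fin d) ℝ) (hS : S.PosDef)
    (hR : R * Rᵀ = 1) (hdetR : R.det = 1) :
    Measure.map
        (fun y : Fin n → Fin d → ℝ =>
          projDet ((matSqrt S * R * (matSqrt S)⁻¹) * wishartSample y
            * (matSqrt S * R * (matSqrt S)⁻¹)ᵀ))
        (Measure.pi fun _ : Fin n => gaussianMeasure S)
      = Measure.map (fun y : Fin n → Fin d → ℝ => projDet (wishartSample y))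
        (Measure.pi fun _ : Fin n => gaussianMeasure S) := by
  set A := matSqrt S * R * (matSqrt S)⁻¹
  have hQS : matSqrt S * (matSqrt S)ᵀ = S := matSqrt_mul_transpose hS.posSemidef
  have hdetA : |A.det| = 1 := by
    rw [det_conj (isUnit_of_mul_transpose_eq hQS hS.isUnit), hdetR, abs_one]
  have hA : MeasurePreserving (A *ᵥ ·) (gaussianMeasure S) (gaussianMeasure S) :=
    measurePreserving_mulVec_gaussianMeasure hdetA
      (transpose_conj_mul_inv_mul_conj hQS hS.isUnit hR)
  simp_rw [← wishartSample_mulVec]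
  exact (measurePreserving_pi _ _ fun _ => hA).map_comp_eq
    (measurable_projDet.comp measurable_wishartSample)

/-- the projective Wishart distribution `PW(Σ, n)`, i.e. the law of
`π(Σᵢ YᵢYᵢᵀ)`, is invariant under the action `x ↦ R_Σ x R_Σᵀ` of `H_Σ`,
where `R_Σ = Σ^{1/2} R Σ^{-1/2}` and `R ∈ SO(d)`. -/
theorem projective_wishart_invariant_H_sigma (d n : ℕ) (hd : 1 ≤ d) (hn : 1 ≤ n)
    (S R : Matrix (Fin d) (Fin d) ℝ) (hS : S.PosDef)
    (hR : R * Rᵀ = 1) (hdetR : R.det = 1) :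
    Measure.map
        (fun y : Fin n → Fin d → ℝ =>
          projDet ((matSqrt S * R * (matSqrt S)⁻¹) * wishartSample y
            * (matSqrt S * R * (matSqrt S)⁻¹)ᵀ))
        (Measure.pi fun _ : Fin n => gaussianMeasure S)
      = Measure.map (fun y : Fin n → Fin d → ℝ => projDet (wishartSample y))
        (Measure.pi fun _ : Fin n => gaussianMeasure S) :=
  projective_wishart_invariant_H_sigma_general d n S R hS hR hdetR
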